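/- Let X be an integral locally noetherian space with big injective E_X. Then every nonzero uniform torsion-free object of Mod X has rank one. -/

import Mathlib

open CategoryTheory CategoryTheory.Limits

universe w v u

section Preliminaries

variable {C : Type u} [Category.{v} C]

/-- An object of a category is *noetherian* if its lattice of subobjects satisfies
the ascending chain condition. -/
def IsNoetherianObject (N : C) : Prop := WellFoundedGT (Subobject N)

/-- A Grothendieck category (non-commutative space) is *locally noetherian* if it has a
set of noetherian generators, i.e. a separating family of noetherian objects. -/
def LocallyNoetherian (C : Type u) [Category.{v} C] : Prop :=
  ∃ (ι : Type v) (G : ι → C), (∀ i, _root_.IsNoetherianObject (G i)) ∧ ObjectProperty.IsSeparating (.ofObj G)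

/-- `M` is a subquotient of `N`: a quotient of a subobject of `N`. -/
def IsSubquotient (N M : C) : Prop :=
  ∃ (S : Subobject N) (f : (S : C) ⟶ M), Epi f

end Preliminaries

/-- Any abelian category has finite biproducts. -/
instance (priority := 100) abelianHasFiniteBiproducts {C : Type u} [Category.{v} C]
    [Abelian C] : HasFiniteBiproducts C :=
  HasFiniteBiproducts.of_hasFiniteProducts

section BigInjective

variable {C : Type u} [Category.{v} C] [Abelian C] [HasColimits C] [AB5 C]

/-- `E` is the *big injective* making the locally noetherian space `X` (with `Mod X = C`)
an integral space: `E` is an indecomposable injective object whose endomorphism ring is a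
division ring, and every object is a subquotient of a coproduct of copies of `E`. -/
structure IsBigInjective (E : C) : Prop where
  injective : Injective E
  nonzero : ¬ IsZero E
  indecomposable : ∀ (A B : C), (E ≅ A ⊞ B) → IsZero A ∨ IsZero B
  division : ∀ f : E ⟶ E, f ≠ 0 → IsIso f
  generates : ∀ M : C, ∃ ι : Type v, IsSubquotient (∐ (fun _ : ι => E)) M

/-- An object `M` is *torsion* (with respect to the big injective `E`) if `Hom(M, E) = 0`. -/
def IsTorsion (E M : C) : Prop := ∀ f : M ⟶ E, f = 0

/-- An object `M` is *torsion-free* if its only torsion subobject is `0`. -/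
def IsTorsionFree (E M : C) : Prop := ∀ S : Subobject M, IsTorsion E (S : C) → S = ⊥

/-- The *rank* of `M`: the length of `Hom(M, E)` as a left module over the division ring
`End(E)`, expressed as the Krull dimension of its lattice of submodules. -/
noncomputable def rank (E M : C) : WithBot ℕ∞ :=
  Order.krullDim (Submodule (End E) (M ⟶ E))

/-- A subobject `L` of `M` is *essential* if every nonzero subobject of `M` meets it
nontrivially. -/
def IsEssentialSubobject {M : C} (L : Subobject M) : Prop :=
  ∀ S : Subobject M, S ≠ ⊥ → S ⊓ L ≠ ⊥

end BigInjective

/-!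
Every object is a quotient of a subobject of a coproduct of copies of `E`. A noetherian
generator mapping nontrivially to `M` through such a presentation lands, by AB5, in a finite
subcoproduct `E^n`, so `M` contains a nonzero torsion-free quotient of a subobject of `E^n`.
Because `End E` is a division ring, a map from a subobject of `E` to `E` vanishing on a nonzero
subobject is zero; inducting on `n`, this yields a nonzero subobject `U` of `M` embedding into
`E`. Extending `U ⟶ E` to `M ⟶ E` by injectivity gives a monomorphism, since by uniformity its
kernel would otherwise meet `U`. Finally, given a monomorphism `f : M ⟶ E`, every map `M ⟶ E`
is `f ≫ ψ` for some `ψ : End E`, invertible when the map is nonzero, so `Hom(M, E)` is a simple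
`End E`-module.
-/

open IsGrothendieckAbelian.IsPresentable

section NoetherianFactorization

variable {C : Type u} [Category.{v} C] [Abelian C] [IsGrothendieckAbelian.{w} C]

lemma exists_factor_through_of_wellFoundedGT {J : Type w} [SmallCategory J] [IsFiltered J]
    {Y : J ⥤ C} [∀ (j j' : J) (φ : j ⟶ j'), Mono (Y.map φ)] {c : Cocone Y} (hc : IsColimit c)
    {X : C} [WellFoundedGT (Subobject X)] (z : X ⟶ c.pt) :
    ∃ (j : J) (y : X ⟶ Y.obj j), z = y ≫ c.ι.app j := by
  have := hc.mono_ι_app_of_isFiltered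
  have := NatTrans.mono_of_mono_app c.ι
  let P (j : J) : Subobject X := Subobject.mk ((surjectivity.F z).obj j).obj.hom
  -- AB5: filtered colimits commute with the pullbacks along `z`, so the preimages exhaust `X`.
  have hsup : ⨆ j, P j = ⊤ := by
    have := surjectivity.isIso_f hc z
    rw [← IsGrothendieckAbelian.subobjectMk_of_isColimit_eq_iSup (surjectivity.F z)
      (colimit.isColimit _) (surjectivity.f z) (surjectivity.hf z)]
    exact Subobject.mk_eq_top_of_isIso (surjectivity.f z)
  have hdir : DirectedOn (· ≤ ·) (Set.range P) := by
    rintro _ ⟨j, rfl⟩ _ ⟨j', rfl⟩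
    exact ⟨_, ⟨IsFiltered.max j j', rfl⟩,
      MonoOver.subobjectMk_le_mk_of_hom ((surjectivity.F z).map (IsFiltered.leftToMax j j')),
      MonoOver.subobjectMk_le_mk_of_hom ((surjectivity.F z).map (IsFiltered.rightToMax j j'))⟩
  have htop : IsCompactElement (⊤ : Subobject X) :=
    (CompleteLattice.isSupFiniteCompact_iff_all_elements_compact _).mp
      (CompleteLattice.WellFoundedGT.isSupFiniteCompact _) ⊤
  obtain ⟨_, ⟨j, rfl⟩, hj⟩ := (CompleteLattice.isCompactElement_iff_le_of_directed_sSup_le _ _).mp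
    htop _ (@Set.range_nonempty _ _ IsFiltered.nonempty P) hdir (by rw [sSup_range, hsup])
  have : IsIso ((pullback.snd c.ι ((Functor.const J).map z)).app j) := by
    change IsIso ((surjectivity.F z).obj j).obj.hom
    rw [Subobject.isIso_iff_mk_eq_top]
    exact top_le_iff.mp hj
  refine ⟨j, inv ((pullback.snd c.ι ((Functor.const J).map z)).app j) ≫
    (pullback.fst c.ι _).app j, ?_⟩
  rw [Category.assoc, IsIso.eq_inv_comp, ← NatTrans.comp_app, pullback.condition,
    NatTrans.comp_app, Functor.const_map_app]

open Limits.CoproductsFromFiniteFiltered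

instance mono_finiteSubcoproductsCocone_ι_app {α : Type w} (f : α → C)
    (s : Finset (Discrete α)) : Mono ((finiteSubcoproductsCocone f).ι.app s) :=
  MonoCoprod.mono_of_injective' f (fun x : s => x.1.as)
    (fun _ _ h => Subtype.ext (Discrete.ext h))

lemma exists_factor_through_finite_subcoproduct {α : Type w} (f : α → C)
    {X : C} [WellFoundedGT (Subobject X)] (z : X ⟶ ∐ f) :
    ∃ (s : Finset (Discrete α)) (y : X ⟶ ∐ fun x : s => f x.1.as),
      z = y ≫ Sigma.desc fun x => Sigma.ι f x.1.as := by
  have (s t : Finset (Discrete α)) (φ : s ⟶ t) :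
      Mono ((liftToFinsetObj (Discrete.functor f)).map φ) :=
    mono_of_mono_fac ((finiteSubcoproductsCocone f).w φ)
  exact exists_factor_through_of_wellFoundedGT (isColimitFiniteSubproductsCocone f) z

end NoetherianFactorization

section Torsion

variable {C : Type u} [Category.{v} C] [Abelian C] {E : C}

lemma IsTorsion.of_iso {X Y : C} (e : X ≅ Y) (h : IsTorsion E X) : IsTorsion E Y :=
  fun f => by rw [← e.inv_hom_id_assoc f, h (e.hom ≫ f), comp_zero]

variable [HasColimits C]

lemma IsTorsionFree.isZero_of_isTorsion {T : C} (hTf : IsTorsionFree E T)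
    (hT : IsTorsion E T) : IsZero T := by
  by_contra h
  have := Subobject.nontrivial_of_not_isZero h
  exact bot_ne_top (hTf ⊤ (hT.of_iso (asIso (⊤ : Subobject T).arrow).symm)).symm

lemma IsTorsionFree.of_mono {U T : C} (u : U ⟶ T) [Mono u] (hT : IsTorsionFree E T) :
    IsTorsionFree E U := by
  intro S hS
  have h := hT _ (hS.of_iso (Subobject.underlyingIso (S.arrow ≫ u)).symm)
  rw [Subobject.mk_eq_bot_iff_zero] at h
  rw [← Subobject.mk_arrow S, Subobject.mk_eq_bot_iff_zero]
  exact zero_of_comp_mono u h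

end Torsion

section Rigidity

variable {C : Type u} [Category.{v} C] [Abelian C] {E : C} [Injective E]
  (hE : ∀ φ : E ⟶ E, φ ≠ 0 → IsIso φ)
include hE

lemma eq_zero_of_comp_eq_zero_of_not_isZero {B K : C} (b : B ⟶ E) [Mono b] (k : K ⟶ B) [Mono k]
    (hK : ¬ IsZero K) (g : B ⟶ E) (hkg : k ≫ g = 0) : g = 0 := by
  have hg : b ≫ Injective.factorThru g b = g := Injective.comp_factorThru g b
  by_contra hg0
  have hφ : Injective.factorThru g b ≠ 0 := fun h => hg0 (by rw [← hg, h, comp_zero])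
  have := hE _ hφ
  apply hK
  refine IsZero.of_mono_eq_zero k (zero_of_comp_mono b (zero_of_comp_mono
    (Injective.factorThru g b) ?_))
  rw [Category.assoc, hg, hkg]

variable [HasColimits C]

lemma mono_of_epi_of_isTorsionFree {B T : C} (b : B ⟶ E) [Mono b] (e : B ⟶ T) [Epi e]
    (hT : ¬ IsZero T) (hTf : IsTorsionFree E T) : Mono e := by
  by_contra he
  have hK : ¬ IsZero (kernel e) :=
    fun hK => he (Abelian.mono_of_kernel_ι_eq_zero _ (hK.eq_of_src _ _))
  refine hT (hTf.isZero_of_isTorsion fun g => ?_)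
  have : e ≫ g = 0 := eq_zero_of_comp_eq_zero_of_not_isZero hE b (kernel.ι e) hK (e ≫ g)
    (by rw [kernel.condition_assoc, zero_comp])
  exact (cancel_epi e).mp (by rw [this, comp_zero])

/-- The hypothesis on `t` says that `T` is a quotient of the image of `G` in `E^s` under the
maps `p i`. -/
lemma exists_nonzero_subobject_embedding_of_epi {α : Type*} [DecidableEq α] (s : Finset α) :
    ∀ {G T : C} (p : α → (G ⟶ E)) (t : G ⟶ T) [Epi t],
      (∀ {Z : C} (z : Z ⟶ G), (∀ i ∈ s, z ≫ p i = 0) → z ≫ t = 0) →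
      ¬ IsZero T → IsTorsionFree E T →
      ∃ (U : C) (u : U ⟶ T) (j : U ⟶ E), Mono u ∧ Mono j ∧ ¬ IsZero U := by
  induction s using Finset.induction_on with
  | empty =>
    intro G T p t _ hp hT _
    exact (hT (IsZero.of_epi_eq_zero t (by simpa using hp (𝟙 G) (by simp)))).elim
  | insert a s _ ih =>
    intro G T p t _ hp hT hTf
    by_cases hq : kernel.ι (p a) ≫ t = 0
    · let e : Abelian.coimage (p a) ⟶ T := cokernel.desc _ t hq
      have : Epi e := epi_of_epi_fac (cokernel.π_desc _ t hq)
      have := mono_of_epi_of_isTorsionFree hE (Abelian.factorThruCoimage (p a)) e hT hTf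
      exact ⟨_, e, Abelian.factorThruCoimage (p a), this, inferInstance,
        fun h => hT (IsZero.of_epi_eq_zero e (h.eq_of_src _ _))⟩
    · let t₁ := factorThruImage (kernel.ι (p a) ≫ t)
      have hT₁ : ¬ IsZero (image (kernel.ι (p a) ≫ t)) := fun h => hq (by
        rw [← image.fac (kernel.ι (p a) ≫ t), h.eq_of_tgt (factorThruImage _) 0, zero_comp])
      have hp₁ {Z : C} (z : Z ⟶ kernel (p a)) (hz : ∀ i ∈ s, z ≫ kernel.ι (p a) ≫ p i = 0) :
          z ≫ t₁ = 0 := by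
        refine zero_of_comp_mono (image.ι _) ?_
        rw [Category.assoc, image.fac, ← Category.assoc]
        refine hp _ fun i hi => ?_
        rcases Finset.mem_insert.mp hi with rfl | hi
        · rw [Category.assoc, kernel.condition, comp_zero]
        · rw [Category.assoc, hz i hi]
      obtain ⟨U, u, j, _, hj, hU⟩ := ih (fun i => kernel.ι (p a) ≫ p i) t₁ hp₁ hT₁
        (hTf.of_mono (image.ι _))
      exact ⟨U, u ≫ image.ι _, j, mono_comp _ _, hj, hU⟩

end Rigidity

section Uniform

variable {C : Type u} [Category.{v} C] [Abelian C]

lemma mono_of_uniform {M Y U : C} (hM : ∀ S T : Subobject M, S ≠ ⊥ → T ≠ ⊥ → S ⊓ T ≠ ⊥)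
    (f : M ⟶ Y) (u : U ⟶ M) [Mono u] [Mono (u ≫ f)] (hU : ¬ IsZero U) : Mono f := by
  have hker : kernelSubobject f = ⊥ := by
    by_contra hne
    refine hM _ (Subobject.mk u) hne
      (fun h => hU (IsZero.of_mono_eq_zero u (Subobject.mk_eq_bot_iff_zero.mp h))) ?_
    have hle : kernelSubobject f ⊓ Subobject.mk u ≤ Subobject.mk u := inf_le_right
    have hf : Subobject.ofLEMk _ u hle ≫ u ≫ f = 0 := by
      rw [← Category.assoc, Subobject.ofLEMk_comp,
        ← Subobject.ofLE_arrow (inf_le_left : _ ≤ kernelSubobject f), Category.assoc,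
        kernelSubobject_arrow_comp, comp_zero]
    rw [← Subobject.mk_arrow (kernelSubobject f ⊓ Subobject.mk u), Subobject.mk_eq_bot_iff_zero,
      ← Subobject.ofLEMk_comp hle, zero_of_comp_mono _ hf, zero_comp]
  have harrow : (kernelSubobject f).arrow = 0 := by rw [hker, Subobject.bot_arrow]
  exact Abelian.mono_of_kernel_ι_eq_zero _ (by rw [← kernelSubobject_arrow', harrow, comp_zero])

end Uniform

section Rank

variable {C : Type u} [Category.{v} C] [Abelian C] {E : C} [Injective E]

lemma rank_eq_one_of_mono (hE : ∀ φ : E ⟶ E, φ ≠ 0 → IsIso φ) {M : C} (f : M ⟶ E) [Mono f]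
    (hM : ¬ IsZero M) : rank E M = (1 : ℕ∞) := by
  have : IsSimpleModule (End E) (M ⟶ E) := by
    refine isSimpleModule_iff_toSpanSingleton_surjective.mpr
      ⟨⟨f, 0, fun h => hM (IsZero.of_mono_eq_zero f h)⟩, fun g hg m => ?_⟩
    obtain ⟨φ, rfl⟩ : ∃ φ, f ≫ φ = g := ⟨_, Injective.comp_factorThru g f⟩
    obtain ⟨ψ, rfl⟩ : ∃ ψ, f ≫ ψ = m := ⟨_, Injective.comp_factorThru m f⟩
    have := hE φ (fun h => hg (by rw [h, comp_zero]))
    exact ⟨inv φ ≫ ψ, show (f ≫ φ) ≫ inv φ ≫ ψ = f ≫ ψ by simp⟩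
  exact Order.krullDim_of_isSimpleOrder

end Rank

section Integral

variable {C : Type u} [Category.{v} C] [Abelian C] [HasColimits C] [AB5 C]

lemma LocallyNoetherian.isGrothendieckAbelian (hX : LocallyNoetherian C) :
    IsGrothendieckAbelian.{v} C where
  hasSeparator := by
    obtain ⟨_, G, -, hG⟩ := hX
    exact ⟨∐ G, hG.isSeparator_coproduct⟩

lemma IsBigInjective.exists_nonzero_subobject_embedding (hX : LocallyNoetherian C) {E : C}
    (hE : IsBigInjective E) {M : C} (hM : ¬ IsZero M) (hMtf : IsTorsionFree E M) :
    ∃ (U : C) (u : U ⟶ M) (j : U ⟶ E), Mono u ∧ Mono j ∧ ¬ IsZero U := by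
  classical
  have := hX.isGrothendieckAbelian
  have := hE.injective
  obtain ⟨ι, S, ρ, _⟩ := hE.generates M
  obtain ⟨_, G, hG, hGsep⟩ := hX
  obtain ⟨i, h, hhρ⟩ : ∃ (i : _) (h : G i ⟶ S), h ≫ ρ ≠ 0 := by
    by_contra! hc
    exact hM (IsZero.of_epi_eq_zero ρ (hGsep ρ 0 (by rintro _ ⟨i⟩ h; simpa using hc i h)))
  have : WellFoundedGT (Subobject (G i)) := hG i
  obtain ⟨s, y, hy⟩ := exists_factor_through_finite_subcoproduct (fun _ : ι => E) (h ≫ S.arrow)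
  let y' := y ≫ (biproduct.isoCoproduct fun _ : s => E).inv
  have hp {Z : C} (z : Z ⟶ G i) (hz : ∀ x ∈ Finset.univ, z ≫ y' ≫ biproduct.π _ x = 0) :
      z ≫ factorThruImage (h ≫ ρ) = 0 := by
    have hzy' : z ≫ y' = 0 := biproduct.hom_ext _ _ fun x => by simpa using hz x (by simp)
    have hzy : z ≫ y = 0 := by
      have : y = y' ≫ (biproduct.isoCoproduct _).hom := by
        simp only [y', Category.assoc, Iso.inv_hom_id, Category.comp_id]
      rw [this, ← Category.assoc, hzy', zero_comp]
    have hzh : z ≫ h = 0 := zero_of_comp_mono S.arrow (by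
      rw [Category.assoc, hy, ← Category.assoc, hzy, zero_comp])
    refine zero_of_comp_mono (image.ι _) ?_
    rw [Category.assoc, image.fac, ← Category.assoc, hzh, zero_comp]
  have hT : ¬ IsZero (image (h ≫ ρ)) := fun hT =>
    hhρ (by rw [← image.fac (h ≫ ρ), hT.eq_of_tgt (factorThruImage _) 0, zero_comp])
  obtain ⟨U, u, j, _, hj, hU⟩ := exists_nonzero_subobject_embedding_of_epi hE.division
    Finset.univ (fun x => y' ≫ biproduct.π _ x) (factorThruImage (h ≫ ρ)) hp hT
    (hMtf.of_mono (image.ι _))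
  exact ⟨U, u ≫ image.ι _, j, mono_comp _ _, hj, hU⟩

end Integral

/-- Theorem 3.12(2). In an integral locally noetherian space with big
injective `E`, every nonzero uniform torsion-free object has rank one. -/
theorem statement5 {C : Type u} [Category.{v} C] [Abelian C] [HasColimits C] [AB5 C]
    (hX : LocallyNoetherian C) (E : C) (hE : IsBigInjective E)
    (M : C) (hM0 : ¬ IsZero M) (hMtf : IsTorsionFree E M)
    (hMuniform : ∀ S T : Subobject M, S ≠ ⊥ → T ≠ ⊥ → S ⊓ T ≠ ⊥) :
    rank E M = (1 : ℕ∞) := by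
  obtain ⟨U, u, j, _, hj, hU⟩ := hE.exists_nonzero_subobject_embedding hX hM0 hMtf
  have := hE.injective
  have : Mono (u ≫ Injective.factorThru j u) := by rwa [Injective.comp_factorThru]
  have := mono_of_uniform hMuniform (Injective.factorThru j u) u hU
  exact rank_eq_one_of_mono hE.division (Injective.factorThru j u) hM0
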